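/- Let L⁻, L⁺ : Ω → 𝕍⁺ be Borel measurable with L⁻ ≤_l L⁺, and set 𝕃₀ := { L : Ω → 𝕍⁺ Borel measurable : L⁻ ≤_l L and L ≤_l L⁺ }. Then every nonempty subset Γ ⊆ 𝕃₀ admits a least upper bound and a greatest lower bound in (𝕃₀, ≤_l): there exists L̄ ∈ 𝕃₀ with L ≤_l L̄ for all L ∈ Γ and such that L̄ ≤_l M for every M ∈ 𝕃₀ satisfying L ≤_l M for all L ∈ Γ; and there exists L̲ ∈ 𝕃₀ with the symmetric greatest-lower-bound property. -/

import Mathlib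

open MeasureTheory Filter Set Topology

noncomputable section

/-- Membership in the space `𝕍⁺` of nondecreasing, left-continuous functions
`v : [0,T) → ℝ ∪ {−∞}` with `v 0 = −∞` and `v` real-valued on `(0,T)`
(encoded as functions `ℝ → WithBot ℝ`, normalized to `⊥` outside `(0,T)`;
left-continuity of a nondecreasing function is expressed in order-theoretic
terms: `v t` is the least upper bound of the values of `v` on `[0,t)`). -/
def InVPlus (T : ℝ) (v : ℝ → WithBot ℝ) : Prop :=
  (∀ t : ℝ, t ∉ Set.Ioo 0 T → v t = ⊥) ∧
  (∀ s t : ℝ, 0 ≤ s → s ≤ t → t < T → v s ≤ v t) ∧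
  (∀ t : ℝ, t ∈ Set.Ioo 0 T → v t ≠ ⊥) ∧
  (∀ t : ℝ, t ∈ Set.Ioo 0 T → IsLUB (v '' Set.Ico 0 t) (v t))

/-- The Lévy metric `d_L` on `𝕍⁺`:
`d_L(v₁,v₂) = inf {ε ≥ 0 : v₁((t−ε)∨0) − ε ≤ v₂(t), v₂((t−ε)∨0) − ε ≤ v₁(t), ∀ t ∈ (0,T)}`. -/
noncomputable def dL (T : ℝ) (v₁ v₂ : ℝ → WithBot ℝ) : ℝ :=
  sInf {ε : ℝ | 0 ≤ ε ∧ ∀ t : ℝ, t ∈ Set.Ioo 0 T →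
    (v₁ (max (t - ε) 0)).map (fun x => x - ε) ≤ v₂ t ∧
    (v₂ (max (t - ε) 0)).map (fun x => x - ε) ≤ v₁ t}

/-- The Polish space `(𝕍⁺, d_L)`, as a type. -/
structure VPlus (T : ℝ) where
  toFun : ℝ → WithBot ℝ
  mem : InVPlus T toFun

/-- The metric topology of `d_L` on `𝕍⁺` (generated by the open balls). -/
instance (T : ℝ) : TopologicalSpace (VPlus T) :=
  TopologicalSpace.generateFrom
    {U : Set (VPlus T) | ∃ v : VPlus T, ∃ ε : ℝ, 0 < ε ∧
      U = {w : VPlus T | dL T v.toFun w.toFun < ε}}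

/-- The Borel σ-algebra of `(𝕍⁺, d_L)`. -/
instance (T : ℝ) : MeasurableSpace (VPlus T) := borel (VPlus T)

/-- The partial order `≤_l` on `𝕍⁺`-valued random elements:
`L¹ ≤_l L²` iff for every `t ∈ [0,T)`, `L¹(ω)(t) ≤ L²(ω)(t)` for ℙ-a.e. `ω`. -/
def lel (T : ℝ) {Ω : Type*} [MeasurableSpace Ω] (P : Measure Ω)
    (L₁ L₂ : Ω → VPlus T) : Prop :=
  ∀ t : ℝ, 0 ≤ t → t < T → ∀ᵐ ω ∂P, (L₁ ω).toFun t ≤ (L₂ ω).toFun t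

/-- Membership in the lattice `𝕃₀` of Borel measurable `L : Ω → 𝕍⁺` with
`L⁻ ≤_l L ≤_l L⁺`. -/
def MemL0 (T : ℝ) {Ω : Type*} [MeasurableSpace Ω] (P : Measure Ω)
    (Lm Lp L : Ω → VPlus T) : Prop :=
  Measurable L ∧ lel T P Lm L ∧ lel T P L Lp

/-!
Ordered pointwise, `𝕍⁺` is a conditionally complete lattice: suprema are pointwise suprema, and
infima are the left-continuous regularisations of pointwise infima. Rational step functions are
dense for the Lévy metric, so `𝕍⁺` is second countable and a map into `𝕍⁺` is Borel measurable
as soon as all its evaluations `ω ↦ L(ω)(t)` are; by left-continuity, `L¹ ≤_l L²` just says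
`L¹ ≤ L²` almost surely.

Among the countable subfamilies of the events `{c < L(ω)(r)}` (`L ∈ Γ`, `r, c ∈ ℚ`), one whose
union has maximal measure absorbs all the others up to null sets. This yields a countable `J ⊆ Γ`
whose pointwise supremum dominates every member of `Γ` almost surely; capped by `L⁺` it is the
least upper bound. Infima over such a `J`, floored by `L⁻`, give the greatest lower bound.
-/

namespace WithBot

theorem exists_rat_btwn {x y : WithBot ℝ} (h : x < y) :
    ∃ q : ℚ, x < ((q : ℝ) : WithBot ℝ) ∧ ((q : ℝ) : WithBot ℝ) < y := by
  induction y with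
  | bot => exact absurd h not_lt_bot
  | coe b =>
    induction x with
    | bot =>
      obtain ⟨q, hq⟩ := exists_rat_lt b
      exact ⟨q, bot_lt_coe _, coe_lt_coe.2 hq⟩
    | coe a =>
      obtain ⟨q, h₁, h₂⟩ := _root_.exists_rat_btwn (coe_lt_coe.1 h)
      exact ⟨q, coe_lt_coe.2 h₁, coe_lt_coe.2 h₂⟩

theorem le_of_forall_rat_lt_imp_lt {x y : WithBot ℝ}
    (h : ∀ q : ℚ, ((q : ℝ) : WithBot ℝ) < x → ((q : ℝ) : WithBot ℝ) < y) : x ≤ y := by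
  by_contra! hyx
  obtain ⟨q, hyq, hqx⟩ := exists_rat_btwn hyx
  exact lt_asymm (h q hqx) hyq

theorem le_of_forall_lt_rat_imp_lt {x y : WithBot ℝ}
    (h : ∀ q : ℚ, y < ((q : ℝ) : WithBot ℝ) → x < ((q : ℝ) : WithBot ℝ)) : x ≤ y := by
  by_contra! hyx
  obtain ⟨q, hyq, hqx⟩ := exists_rat_btwn hyx
  exact lt_asymm (h q hyq) hqx

theorem map_sub_le_map_sub {a b : WithBot ℝ} {ε ε' : ℝ} (hab : a ≤ b) (hε : ε ≤ ε') :
    a.map (· - ε') ≤ b.map (· - ε) := by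
  induction a with
  | bot => simp
  | coe x =>
    induction b with
    | bot => exact absurd hab (not_le.2 (bot_lt_coe x))
    | coe y =>
      simp only [map_coe, coe_le_coe] at hab ⊢
      linarith

theorem map_sub_le_coe_iff {a : WithBot ℝ} {ε y : ℝ} :
    a.map (· - ε) ≤ (y : WithBot ℝ) ↔ a ≤ ((y + ε : ℝ) : WithBot ℝ) := by
  induction a with
  | bot => simp
  | coe x => simp only [map_coe, coe_le_coe, sub_le_iff_le_add]

theorem map_sub_le_self {ε : ℝ} (hε : 0 ≤ ε) (a : WithBot ℝ) : a.map (· - ε) ≤ a := by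
  induction a with
  | bot => simp
  | coe x => simpa using hε

theorem exists_rat_approx (x : WithBot ℝ) {ε : ℝ} (hε : 0 < ε) :
    ∃ q : ℚ, x.map (· - ε) ≤ ((q : ℝ) : WithBot ℝ) ∧ (x ≠ ⊥ → ((q : ℝ) : WithBot ℝ) ≤ x) := by
  induction x with
  | bot => exact ⟨0, by simp, fun h => absurd rfl h⟩
  | coe y =>
    obtain ⟨q, h₁, h₂⟩ := _root_.exists_rat_btwn (sub_lt_self y hε)
    exact ⟨q, by simpa using h₁.le, fun _ => coe_le_coe.2 h₂.le⟩

instance : MeasurableSpace (WithBot ℝ) := borel _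

instance : BorelSpace (WithBot ℝ) := ⟨rfl⟩

instance : TopologicalSpace.SeparableSpace (WithBot ℝ) :=
  ⟨⟨range fun q : ℚ => ((q : ℝ) : WithBot ℝ), countable_range _,
    dense_of_exists_between fun _ _ h => by
      obtain ⟨q, hq⟩ := exists_rat_btwn h
      exact ⟨_, ⟨q, rfl⟩, hq⟩⟩⟩

instance : SecondCountableTopology (WithBot ℝ) :=
  .of_separableSpace_orderTopology _

end WithBot

theorem Finset.exists_forall_lt_imp_lt (A : Finset ℝ) {t : ℝ} (ht : 0 < t) :
    ∃ s ∈ Set.Ioo 0 t, ∀ a ∈ A, a < t → a < s := by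
  set B := insert (t / 2) (A.filter (· < t))
  have hB : B.max' (insert_nonempty _ _) < t :=
    (B.max'_lt_iff _).2 fun b hb => by
      rcases Finset.mem_insert.1 hb with rfl | hb
      · linarith
      · exact (Finset.mem_filter.1 hb).2
  have hB₀ : t / 2 ≤ B.max' (insert_nonempty _ _) := B.le_max' _ (Finset.mem_insert_self _ _)
  refine ⟨(B.max' (insert_nonempty _ _) + t) / 2, ⟨by linarith, by linarith⟩, fun a ha hat => ?_⟩
  have := B.le_max' a (Finset.mem_insert_of_mem (Finset.mem_filter.2 ⟨ha, hat⟩))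
  linarith

namespace MeasureTheory

variable {Ω ι : Type*} [MeasurableSpace Ω] (μ : Measure Ω) [IsFiniteMeasure μ]

/-- A countable subfamily of maximal measure absorbs every member. -/
theorem exists_countable_ae_subset_biUnion (A : ι → Set Ω) (hA : ∀ i, MeasurableSet (A i)) :
    ∃ J : Set ι, J.Countable ∧ ∀ i, A i ≤ᵐ[μ] ⋃ j ∈ J, A j := by
  set f : {J : Set ι // J.Countable} → ENNReal := fun J => μ (⋃ j ∈ J.1, A j)
  have : Nonempty {J : Set ι // J.Countable} := ⟨⟨∅, countable_empty⟩⟩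
  obtain ⟨u, -, hu, hu_mem⟩ := exists_seq_tendsto_sSup (range_nonempty f) (OrderTop.bddAbove _)
  choose Js hJs using hu_mem
  set J : {J : Set ι // J.Countable} := ⟨⋃ n, (Js n).1, countable_iUnion fun n => (Js n).2⟩
  have hJ : sSup (range f) ≤ f J := le_of_tendsto' hu fun n => hJs n ▸
    measure_mono (biUnion_subset_biUnion_left (subset_iUnion (fun n => (Js n).1) n))
  refine ⟨J.1, J.2, fun i => ae_le_set.2 ?_⟩
  have hi : f ⟨insert i J.1, J.2.insert i⟩ ≤ f J := (le_sSup (mem_range_self _)).trans hJ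
  rw [measure_sdiff' _ (MeasurableSet.biUnion J.2 fun j _ => hA j).nullMeasurableSet
    (measure_ne_top _ _)]
  refine tsub_eq_zero_of_le (le_of_eq_of_le ?_ hi)
  simp only [f, biUnion_insert]

theorem exists_countable_forall_ae_subset_biUnion {κ : Type*} [Countable κ]
    (A : κ → ι → Set Ω) (hA : ∀ k i, MeasurableSet (A k i)) :
    ∃ J : Set ι, J.Countable ∧ ∀ k i, A k i ≤ᵐ[μ] ⋃ j ∈ J, A k j := by
  choose J hJ hAJ using fun k => exists_countable_ae_subset_biUnion μ (A k) (hA k)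
  exact ⟨⋃ k, J k, countable_iUnion hJ, fun k i => (hAJ k i).trans
    (LE.le.eventuallyLE (biUnion_subset_biUnion_left (subset_iUnion J k)))⟩

end MeasureTheory

namespace VPlus

variable {T : ℝ}

theorem toFun_eq_bot (v : VPlus T) {t : ℝ} (ht : t ∉ Ioo 0 T) : v.toFun t = ⊥ :=
  v.mem.1 t ht

theorem toFun_zero (v : VPlus T) : v.toFun 0 = ⊥ :=
  v.toFun_eq_bot fun h => lt_irrefl _ h.1

theorem toFun_ne_bot (v : VPlus T) {t : ℝ} (ht : t ∈ Ioo 0 T) : v.toFun t ≠ ⊥ :=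
  v.mem.2.2.1 t ht

theorem mem_Ioo_of_toFun_ne_bot (v : VPlus T) {t : ℝ} (ht : v.toFun t ≠ ⊥) : t ∈ Ioo 0 T :=
  not_not.1 fun h => ht (v.toFun_eq_bot h)

theorem isLUB_toFun (v : VPlus T) {t : ℝ} (ht : t ∈ Ioo 0 T) :
    IsLUB (v.toFun '' Ico 0 t) (v.toFun t) :=
  v.mem.2.2.2 t ht

theorem toFun_mono (v : VPlus T) {s t : ℝ} (hst : s ≤ t) (ht : t < T) :
    v.toFun s ≤ v.toFun t := by
  by_cases hs : 0 ≤ s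
  · exact v.mem.2.1 s t hs hst ht
  · rw [v.toFun_eq_bot fun h => hs h.1.le]
    exact bot_le

theorem exists_lt_toFun {v : VPlus T} {t : ℝ} {c : WithBot ℝ} (h : c < v.toFun t) :
    ∃ s ∈ Ioo 0 t, c < v.toFun s := by
  have ht := v.mem_Ioo_of_toFun_ne_bot (ne_bot_of_gt h)
  obtain ⟨_, ⟨s, hs, rfl⟩, hcs⟩ := (lt_isLUB_iff (v.isLUB_toFun ht)).1 h
  have hs0 : s ≠ 0 := by rintro rfl; simp [toFun_zero] at hcs
  exact ⟨s, ⟨lt_of_le_of_ne hs.1 (Ne.symm hs0), hs.2⟩, hcs⟩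

theorem toFun_le_of_forall_rat {v : VPlus T} {t : ℝ} {b : WithBot ℝ}
    (h : ∀ q : ℚ, (q : ℝ) ∈ Ioo 0 t → v.toFun q ≤ b) : v.toFun t ≤ b := by
  by_contra! hbt
  obtain ⟨s, hs, hbs⟩ := exists_lt_toFun hbt
  have htT := (v.mem_Ioo_of_toFun_ne_bot (ne_bot_of_gt hbt)).2
  obtain ⟨q, hsq, hqt⟩ := _root_.exists_rat_btwn hs.2
  exact (h q ⟨hs.1.trans hsq, hqt⟩).not_gt (hbs.trans_le (v.toFun_mono hsq.le (hqt.trans htT)))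

theorem toFun_injective : Function.Injective (toFun : VPlus T → ℝ → WithBot ℝ) := by
  rintro ⟨f, hf⟩ ⟨g, hg⟩ rfl
  rfl

theorem inVPlus_sup (v w : VPlus T) : InVPlus T (v.toFun ⊔ w.toFun) := by
  refine ⟨fun t ht => by simp [v.toFun_eq_bot ht, w.toFun_eq_bot ht],
    fun s t _ hst ht => sup_le_sup (v.toFun_mono hst ht) (w.toFun_mono hst ht),
    fun t ht => by simp [v.toFun_ne_bot ht], fun t ht => ⟨?_, fun b hb => ?_⟩⟩
  · rintro _ ⟨s, hs, rfl⟩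
    exact sup_le_sup (v.toFun_mono hs.2.le ht.2) (w.toFun_mono hs.2.le ht.2)
  · have hb' : ∀ s ∈ Ico 0 t, v.toFun s ≤ b ∧ w.toFun s ≤ b := fun s hs =>
      sup_le_iff.1 (hb ⟨s, hs, rfl⟩)
    exact sup_le ((v.isLUB_toFun ht).2 (by rintro _ ⟨s, hs, rfl⟩; exact (hb' s hs).1))
      ((w.isLUB_toFun ht).2 (by rintro _ ⟨s, hs, rfl⟩; exact (hb' s hs).2))

theorem inVPlus_inf (v w : VPlus T) : InVPlus T (v.toFun ⊓ w.toFun) := by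
  refine ⟨fun t ht => by simp [v.toFun_eq_bot ht],
    fun s t _ hst ht => inf_le_inf (v.toFun_mono hst ht) (w.toFun_mono hst ht),
    fun t ht => by simp [v.toFun_ne_bot ht, w.toFun_ne_bot ht], fun t ht => ⟨?_, fun b hb => ?_⟩⟩
  · rintro _ ⟨s, hs, rfl⟩
    exact inf_le_inf (v.toFun_mono hs.2.le ht.2) (w.toFun_mono hs.2.le ht.2)
  · -- below `t`, `v` and `w` exceed any level they exceed at `t` simultaneously
    refine le_of_not_gt fun hbt => ?_
    obtain ⟨s₁, hs₁, hv⟩ := exists_lt_toFun (lt_inf_iff.1 hbt).1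
    obtain ⟨s₂, hs₂, hw⟩ := exists_lt_toFun (lt_inf_iff.1 hbt).2
    have hs : max s₁ s₂ ∈ Ico 0 t := ⟨le_max_of_le_left hs₁.1.le, max_lt hs₁.2 hs₂.2⟩
    refine (hb ⟨_, hs, rfl⟩).not_gt (lt_inf_iff.2 ⟨?_, ?_⟩)
    · exact hv.trans_le (v.toFun_mono (le_max_left _ _) (hs.2.trans ht.2))
    · exact hw.trans_le (w.toFun_mono (le_max_right _ _) (hs.2.trans ht.2))

instance : Max (VPlus T) := ⟨fun v w => ⟨_, inVPlus_sup v w⟩⟩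

instance : Min (VPlus T) := ⟨fun v w => ⟨_, inVPlus_inf v w⟩⟩

instance : PartialOrder (VPlus T) := PartialOrder.lift _ toFun_injective

instance : Lattice (VPlus T) :=
  toFun_injective.lattice _ Iff.rfl Iff.rfl (fun _ _ => rfl) fun _ _ => rfl

theorem le_def {v w : VPlus T} : v ≤ w ↔ ∀ t, v.toFun t ≤ w.toFun t := Iff.rfl

theorem le_of_forall_rat {v w : VPlus T}
    (h : ∀ q : ℚ, (q : ℝ) ∈ Ioo 0 T → v.toFun q ≤ w.toFun q) : v ≤ w := by
  intro t
  by_cases ht : t < T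
  · exact toFun_le_of_forall_rat fun q hq =>
      (h q ⟨hq.1, hq.2.trans ht⟩).trans (w.toFun_mono hq.2.le ht)
  · rw [v.toFun_eq_bot fun h => ht h.2]
    exact bot_le

def stepFun (T : ℝ) (q₀ : ℚ) (F : Finset (ℚ × ℚ)) (t : ℝ) : WithBot ℝ :=
  if t ∈ Ioo 0 T then
    ((q₀ : ℝ) : WithBot ℝ) ⊔ (F.filter fun p => (p.1 : ℝ) < t).sup fun p => ((p.2 : ℝ) : WithBot ℝ)
  else ⊥

theorem inVPlus_stepFun (q₀ : ℚ) (F : Finset (ℚ × ℚ)) : InVPlus T (stepFun T q₀ F) := by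
  have hmono : ∀ s t : ℝ, 0 ≤ s → s ≤ t → t < T → stepFun T q₀ F s ≤ stepFun T q₀ F t := by
    intro s t _ hst ht
    by_cases hs : s ∈ Ioo 0 T
    · rw [stepFun, stepFun, if_pos hs, if_pos ⟨hs.1.trans_le hst, ht⟩]
      refine sup_le_sup_left (Finset.sup_mono fun p hp => ?_) _
      simp only [Finset.mem_filter] at hp ⊢
      exact ⟨hp.1, hp.2.trans_le hst⟩
    · rw [stepFun, if_neg hs]
      exact bot_le
  refine ⟨fun t ht => if_neg ht, hmono, fun t ht => ?_, fun t ht => ⟨?_, fun b hb => ?_⟩⟩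
  · rw [stepFun, if_pos ht]
    exact ne_bot_of_le_ne_bot (WithBot.coe_ne_bot) le_sup_left
  · rintro _ ⟨s, hs, rfl⟩
    exact hmono s t hs.1 hs.2.le ht.2
  · obtain ⟨s, hs, hFs⟩ := (F.image fun p => (p.1 : ℝ)).exists_forall_lt_imp_lt ht.1
    have hst : stepFun T q₀ F s = stepFun T q₀ F t := by
      rw [stepFun, stepFun, if_pos ⟨hs.1, hs.2.trans ht.2⟩, if_pos ht]
      congr 2
      ext p
      simp only [Finset.mem_filter, and_congr_right_iff]
      exact fun hp => ⟨fun h => h.trans hs.2, hFs _ (Finset.mem_image_of_mem _ hp)⟩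
    exact hst ▸ hb ⟨s, ⟨hs.1.le, hs.2⟩, rfl⟩

def step (q₀ : ℚ) (F : Finset (ℚ × ℚ)) : VPlus T := ⟨stepFun T q₀ F, inVPlus_stepFun q₀ F⟩

theorem step_toFun_le_iff {q₀ : ℚ} {F : Finset (ℚ × ℚ)} {t : ℝ} (ht : t ∈ Ioo 0 T)
    {b : WithBot ℝ} : (step q₀ F : VPlus T).toFun t ≤ b ↔
      ((q₀ : ℝ) : WithBot ℝ) ≤ b ∧ ∀ p ∈ F, (p.1 : ℝ) < t → ((p.2 : ℝ) : WithBot ℝ) ≤ b := by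
  change stepFun T q₀ F t ≤ b ↔ _
  simp only [stepFun, if_pos ht, sup_le_iff, Finset.sup_le_iff, Finset.mem_filter, and_imp]

instance : Inhabited (VPlus T) := ⟨step 0 ∅⟩

section ConditionallyComplete

variable {S : Set (VPlus T)} {v : VPlus T} {t : ℝ} {b : WithBot ℝ}

theorem bddAbove_image_toFun (hS : BddAbove S) (t : ℝ) : BddAbove ((·.toFun t) '' S) :=
  Monotone.map_bddAbove (f := fun v : VPlus T => v.toFun t) (fun _ _ h => le_def.1 h t) hS

def supFun (S : Set (VPlus T)) (t : ℝ) : WithBot ℝ := sSup ((·.toFun t) '' S)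

/-- Pointwise infima of left-continuous functions need not be left-continuous, so the infimum
of `S` is the left-continuous regularisation of its pointwise infimum. -/
def infFun (S : Set (VPlus T)) (t : ℝ) : WithBot ℝ :=
  if t ∈ Ioo 0 T then ⨆ q : {q : ℚ // (q : ℝ) ∈ Ioo 0 t}, sInf ((·.toFun q) '' S) else ⊥

theorem le_supFun (hS : BddAbove S) (hv : v ∈ S) (t : ℝ) : v.toFun t ≤ supFun S t :=
  le_csSup (bddAbove_image_toFun hS t) ⟨v, hv, rfl⟩

theorem supFun_le (hS : S.Nonempty) (h : ∀ v ∈ S, v.toFun t ≤ b) : supFun S t ≤ b :=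
  csSup_le (hS.image _) (by rintro _ ⟨v, hv, rfl⟩; exact h v hv)

theorem inVPlus_supFun (hne : S.Nonempty) (hbdd : BddAbove S) : InVPlus T (supFun S) := by
  have hmono : ∀ s t : ℝ, s ≤ t → t < T → supFun S s ≤ supFun S t := fun s t hst ht =>
    supFun_le hne fun v hv => (v.toFun_mono hst ht).trans (le_supFun hbdd hv t)
  obtain ⟨v₀, hv₀⟩ := hne
  refine ⟨fun t ht => le_bot_iff.1 (supFun_le ⟨v₀, hv₀⟩ fun v _ => (v.toFun_eq_bot ht).le),
    fun s t _ => hmono s t, fun t ht => ne_bot_of_le_ne_bot (v₀.toFun_ne_bot ht)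
      (le_supFun hbdd hv₀ t), fun t ht => ⟨?_, fun b hb => supFun_le ⟨v₀, hv₀⟩ fun v hv => ?_⟩⟩
  · rintro _ ⟨s, hs, rfl⟩
    exact hmono s t hs.2.le ht.2
  · refine (v.isLUB_toFun ht).2 ?_
    rintro _ ⟨s, hs, rfl⟩
    exact (le_supFun hbdd hv s).trans (hb ⟨s, hs, rfl⟩)

theorem le_infFun (hS : S.Nonempty) (ht : t ∈ Ioo 0 T) {q : ℚ} (hq : (q : ℝ) ∈ Ioo 0 t) :
    sInf ((·.toFun q) '' S) ≤ infFun S t := by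
  obtain ⟨v₀, hv₀⟩ := hS
  rw [infFun, if_pos ht]
  refine le_ciSup (f := fun q : {q : ℚ // (q : ℝ) ∈ Ioo 0 t} => sInf ((·.toFun q) '' S))
    ⟨v₀.toFun t, ?_⟩ ⟨q, hq⟩
  rintro _ ⟨q', rfl⟩
  exact (csInf_le (OrderBot.bddBelow _) (mem_image_of_mem _ hv₀)).trans
    (v₀.toFun_mono q'.2.2.le ht.2)

theorem infFun_le (ht : t ∈ Ioo 0 T)
    (h : ∀ q : ℚ, (q : ℝ) ∈ Ioo 0 t → sInf ((·.toFun q) '' S) ≤ b) : infFun S t ≤ b := by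
  obtain ⟨q, hq⟩ := _root_.exists_rat_btwn ht.1
  have : Nonempty {q : ℚ // (q : ℝ) ∈ Ioo 0 t} := ⟨⟨q, hq⟩⟩
  rw [infFun, if_pos ht]
  exact ciSup_le fun q => h q q.2

theorem inVPlus_infFun (hne : S.Nonempty) (hbdd : BddBelow S) : InVPlus T (infFun S) := by
  have hmono : ∀ s t : ℝ, 0 ≤ s → s ≤ t → t < T → infFun S s ≤ infFun S t := by
    intro s t _ hst ht
    by_cases hs : s ∈ Ioo 0 T
    · exact infFun_le hs fun q hq =>
        le_infFun hne ⟨hs.1.trans_le hst, ht⟩ ⟨hq.1, hq.2.trans_le hst⟩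
    · rw [infFun, if_neg hs]
      exact bot_le
  obtain ⟨B, hB⟩ := hbdd
  refine ⟨fun t ht => if_neg ht, hmono, fun t ht => ?_, fun t ht => ⟨?_, fun b hb => ?_⟩⟩
  · obtain ⟨q, hq₀, hqt⟩ := _root_.exists_rat_btwn ht.1
    refine ne_bot_of_le_ne_bot (B.toFun_ne_bot ⟨hq₀, hqt.trans ht.2⟩) ?_
    exact (le_csInf (hne.image _) (by rintro _ ⟨v, hv, rfl⟩; exact hB hv q)).trans
      (le_infFun hne ht ⟨hq₀, hqt⟩)
  · rintro _ ⟨s, hs, rfl⟩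
    exact hmono s t hs.1 hs.2.le ht.2
  · refine infFun_le ht fun q hq => ?_
    have hs : ((q : ℝ) + t) / 2 ∈ Ioo 0 t := ⟨by linarith [hq.1, ht.1], by linarith [hq.2]⟩
    exact (le_infFun hne ⟨hs.1, hs.2.trans ht.2⟩ ⟨hq.1, by linarith [hq.2]⟩).trans
      (hb ⟨_, ⟨hs.1.le, hs.2⟩, rfl⟩)

open Classical in
instance : ConditionallyCompleteLattice (VPlus T) where
  sSup S := if h : S.Nonempty ∧ BddAbove S then ⟨supFun S, inVPlus_supFun h.1 h.2⟩ else default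
  sInf S := if h : S.Nonempty ∧ BddBelow S then ⟨infFun S, inVPlus_infFun h.1 h.2⟩ else default
  isLUB_csSup S hne hbdd := by
    rw [dif_pos ⟨hne, hbdd⟩]
    exact ⟨fun v hv t => le_supFun hbdd hv t, fun w hw t => supFun_le hne fun v hv => hw hv t⟩
  isGLB_csInf S hne hbdd := by
    rw [dif_pos ⟨hne, hbdd⟩]
    refine ⟨fun v hv t => ?_, fun w hw t => ?_⟩
    · by_cases ht : t ∈ Ioo 0 T
      · exact infFun_le ht fun q hq =>
          (csInf_le (OrderBot.bddBelow _) (mem_image_of_mem _ hv)).trans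
            (v.toFun_mono hq.2.le ht.2)
      · rw [v.toFun_eq_bot ht]
        exact (if_neg ht).le
    · by_cases ht : t ∈ Ioo 0 T
      · exact toFun_le_of_forall_rat fun q hq =>
          (le_csInf (hne.image _) (by rintro _ ⟨v, hv, rfl⟩; exact hw hv q)).trans
            (le_infFun hne ht hq)
      · rw [w.toFun_eq_bot ht]
        exact bot_le

theorem toFun_sSup (hne : S.Nonempty) (hbdd : BddAbove S) : (sSup S).toFun = supFun S := by
  rw [show sSup S = ⟨supFun S, inVPlus_supFun hne hbdd⟩ from dif_pos ⟨hne, hbdd⟩]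

theorem toFun_sInf (hne : S.Nonempty) (hbdd : BddBelow S) : (sInf S).toFun = infFun S := by
  rw [show sInf S = ⟨infFun S, inVPlus_infFun hne hbdd⟩ from dif_pos ⟨hne, hbdd⟩]

theorem toFun_ciSup {ι : Sort*} [Nonempty ι] {v : ι → VPlus T} (hv : BddAbove (range v))
    (t : ℝ) : (⨆ i, v i).toFun t = ⨆ i, (v i).toFun t := by
  rw [iSup, toFun_sSup (range_nonempty v) hv, supFun, ← range_comp]
  rfl

theorem toFun_ciInf {ι : Sort*} [Nonempty ι] {v : ι → VPlus T} (hv : BddBelow (range v))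
    (t : ℝ) : (⨅ i, v i).toFun t =
      if t ∈ Ioo 0 T then ⨆ q : {q : ℚ // (q : ℝ) ∈ Ioo 0 t}, ⨅ i, (v i).toFun q else ⊥ := by
  rw [iInf, toFun_sInf (range_nonempty v) hv, infFun]
  simp only [← range_comp]
  rfl

end ConditionallyComplete

end VPlus

def levyShift (ε : ℝ) (v : ℝ → WithBot ℝ) (t : ℝ) : WithBot ℝ :=
  (v (max (t - ε) 0)).map (· - ε)

def LevyLE (T ε : ℝ) (v w : ℝ → WithBot ℝ) : Prop :=
  ∀ t ∈ Ioo 0 T, levyShift ε v t ≤ w t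

theorem dL_eq_sInf (T : ℝ) (v w : ℝ → WithBot ℝ) :
    dL T v w = sInf {ε | 0 ≤ ε ∧ LevyLE T ε v w ∧ LevyLE T ε w v} := by
  simp only [dL, LevyLE, levyShift, ← forall₂_and]

theorem levyShift_add {a : ℝ} (ha : 0 ≤ a) (b : ℝ) (v : ℝ → WithBot ℝ) (t : ℝ) :
    levyShift (a + b) v t = (levyShift a v (max (t - b) 0)).map (· - b) := by
  have : max (max (t - b) 0 - a) 0 = max (t - (a + b)) 0 := by
    rcases le_total (t - b) 0 with h | h
    · rw [max_eq_right h, max_eq_right (by linarith), max_eq_right (by linarith)]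
    · rw [max_eq_left h, sub_sub, add_comm b a]
  simp only [levyShift, this, WithBot.map_map]
  congr 1
  ext x
  simp only [Function.comp_apply]
  ring

theorem levyShift_eq_bot {T : ℝ} (v : VPlus T) {ε t : ℝ} (ht : t ≤ ε) :
    levyShift ε v.toFun t = ⊥ := by
  rw [levyShift, max_eq_right (by linarith), v.toFun_zero, WithBot.map_bot]

namespace LevyLE

variable {T : ℝ} {u v w : VPlus T}

theorem refl (v : VPlus T) : LevyLE T 0 v.toFun v.toFun := fun t ht => by
  rw [levyShift, sub_zero, max_eq_left ht.1.le]
  induction v.toFun t <;> simp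

theorem of_le {ε : ℝ} (h : T ≤ ε) : LevyLE T ε v.toFun w.toFun := fun t ht => by
  rw [levyShift_eq_bot v (by linarith [ht.2])]
  exact bot_le

theorem mono {ε ε' : ℝ} (h : LevyLE T ε v.toFun w.toFun) (hε₀ : 0 ≤ ε) (hε : ε ≤ ε') :
    LevyLE T ε' v.toFun w.toFun := fun t ht =>
  (WithBot.map_sub_le_map_sub (v.toFun_mono (max_le_max (by linarith) le_rfl)
    (max_lt (by linarith [ht.2]) (ht.1.trans ht.2))) hε).trans (h t ht)

theorem trans {a b : ℝ} (ha : 0 ≤ a) (hb : 0 ≤ b) (huv : LevyLE T a u.toFun v.toFun)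
    (hvw : LevyLE T b v.toFun w.toFun) : LevyLE T (a + b) u.toFun w.toFun := fun t ht => by
  set s := max (t - b) 0
  have hs : levyShift a u.toFun s ≤ v.toFun s := by
    by_cases hs : s ∈ Ioo 0 T
    · exact huv s hs
    · have : s ≤ 0 := not_lt.1 fun h => hs ⟨h, max_lt (by linarith [ht.2]) (ht.1.trans ht.2)⟩
      rw [levyShift_eq_bot u (by linarith)]
      exact bot_le
  rw [levyShift_add ha]
  exact (WithBot.map_sub_le_map_sub hs le_rfl).trans (hvw t ht)

end LevyLE

namespace VPlus

variable {T : ℝ}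

theorem levyBounds_nonempty (v w : VPlus T) :
    {ε | 0 ≤ ε ∧ LevyLE T ε v.toFun w.toFun ∧ LevyLE T ε w.toFun v.toFun}.Nonempty :=
  ⟨max T 0, le_max_right _ _, LevyLE.of_le (le_max_left _ _), LevyLE.of_le (le_max_left _ _)⟩

theorem dL_le {v w : VPlus T} {ε : ℝ} (hε : 0 ≤ ε) (h₁ : LevyLE T ε v.toFun w.toFun)
    (h₂ : LevyLE T ε w.toFun v.toFun) : dL T v.toFun w.toFun ≤ ε := by
  rw [dL_eq_sInf]
  exact csInf_le ⟨0, fun _ h => h.1⟩ ⟨hε, h₁, h₂⟩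

theorem dL_lt_iff {v w : VPlus T} {ε : ℝ} : dL T v.toFun w.toFun < ε ↔
    ∃ δ < ε, 0 ≤ δ ∧ LevyLE T δ v.toFun w.toFun ∧ LevyLE T δ w.toFun v.toFun := by
  rw [dL_eq_sInf, csInf_lt_iff ⟨0, fun _ h => h.1⟩ (levyBounds_nonempty v w)]
  exact ⟨fun ⟨δ, h, hδ⟩ => ⟨δ, hδ, h⟩, fun ⟨δ, hδ, h⟩ => ⟨δ, h, hδ⟩⟩

theorem dL_self (v : VPlus T) : dL T v.toFun v.toFun = 0 := by
  refine le_antisymm (dL_le le_rfl (LevyLE.refl v) (LevyLE.refl v)) ?_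
  rw [dL_eq_sInf]
  exact le_csInf (levyBounds_nonempty v v) fun _ h => h.1

theorem dL_comm (v w : VPlus T) : dL T v.toFun w.toFun = dL T w.toFun v.toFun := by
  simp only [dL_eq_sInf, and_comm (a := LevyLE T _ v.toFun w.toFun)]

theorem dL_triangle (u v w : VPlus T) :
    dL T u.toFun w.toFun ≤ dL T u.toFun v.toFun + dL T v.toFun w.toFun := by
  refine le_of_forall_pos_lt_add fun ε hε => ?_
  obtain ⟨a, ha, ha₀, huv, hvu⟩ := dL_lt_iff.1 (lt_add_of_pos_right (dL T u.toFun v.toFun)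
    (half_pos hε))
  obtain ⟨b, hb, hb₀, hvw, hwv⟩ := dL_lt_iff.1 (lt_add_of_pos_right (dL T v.toFun w.toFun)
    (half_pos hε))
  calc dL T u.toFun w.toFun ≤ a + b :=
        dL_le (add_nonneg ha₀ hb₀) (huv.trans ha₀ hb₀ hvw) (add_comm b a ▸ hwv.trans hb₀ ha₀ hvu)
    _ < _ := by linarith

theorem isOpen_iff_dL {s : Set (VPlus T)} :
    IsOpen s ↔ ∀ v ∈ s, ∃ ε > 0, ∀ w, dL T v.toFun w.toFun < ε → w ∈ s := by
  constructor
  · intro hs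
    change TopologicalSpace.GenerateOpen _ s at hs
    induction hs with
    | basic U hU =>
      obtain ⟨c, ε, -, rfl⟩ := hU
      refine fun v hv => ⟨ε - dL T c.toFun v.toFun, sub_pos.2 hv, fun w hw => ?_⟩
      have := dL_triangle c v w
      show dL T c.toFun w.toFun < ε
      linarith
    | univ => exact fun _ _ => ⟨1, one_pos, fun _ _ => trivial⟩
    | inter U V _ _ hU hV =>
      intro v hv
      obtain ⟨ε, hε, hεU⟩ := hU v hv.1
      obtain ⟨δ, hδ, hδV⟩ := hV v hv.2
      exact ⟨min ε δ, lt_min hε hδ, fun w hw =>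
        ⟨hεU w (hw.trans_le (min_le_left _ _)), hδV w (hw.trans_le (min_le_right _ _))⟩⟩
    | sUnion S _ ih =>
      rintro v ⟨U, hU, hv⟩
      obtain ⟨ε, hε, hεU⟩ := ih U hU v hv
      exact ⟨ε, hε, fun w hw => ⟨U, hU, hεU w hw⟩⟩
  · intro h
    refine isOpen_iff_forall_mem_open.2 fun v hv => ?_
    obtain ⟨ε, hε, hεs⟩ := h v hv
    exact ⟨_, hεs, TopologicalSpace.GenerateOpen.basic _ ⟨v, ε, hε, rfl⟩,
      show dL T v.toFun v.toFun < ε from (dL_self v).symm ▸ hε⟩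

instance : PseudoMetricSpace (VPlus T) :=
  .ofDistTopology (fun v w => dL T v.toFun w.toFun) dL_self dL_comm dL_triangle
    fun _ => isOpen_iff_dL

theorem dist_eq (v w : VPlus T) : dist v w = dL T v.toFun w.toFun := rfl

theorem isOpen_lt_toFun (c : WithBot ℝ) (t : ℝ) : IsOpen {v : VPlus T | c < v.toFun t} := by
  refine Metric.isOpen_iff.2 fun v hv => ?_
  have htT := (v.mem_Ioo_of_toFun_ne_bot (ne_bot_of_gt hv)).2
  obtain ⟨s, hs, hcs⟩ := exists_lt_toFun hv
  obtain ⟨q, hcq, hqs⟩ := WithBot.exists_rat_btwn hcs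
  obtain ⟨y, hy⟩ := WithBot.ne_bot_iff_exists.1 (ne_bot_of_gt hqs)
  rw [← hy, WithBot.coe_lt_coe] at hqs
  refine ⟨min (t - s) (y - q), lt_min (by linarith [hs.2]) (by linarith), fun w hw => ?_⟩
  obtain ⟨δ, hδ, hδ₀, -, hvw⟩ := dL_lt_iff.1 (Metric.mem_ball.1 hw)
  have hδs := min_le_left (t - s) (y - q)
  have hδy := min_le_right (t - s) (y - q)
  have hs' : s ≤ max (t - δ) 0 := le_max_of_le_left (by linarith)
  calc c < ((q : ℝ) : WithBot ℝ) := hcq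
    _ < ((y - δ : ℝ) : WithBot ℝ) := WithBot.coe_lt_coe.2 (by linarith)
    _ = (v.toFun s).map (· - δ) := by rw [← hy, WithBot.map_coe]
    _ ≤ levyShift δ v.toFun t := WithBot.map_sub_le_map_sub
      (v.toFun_mono hs' (max_lt (by linarith) (hs.1.trans (hs.2.trans htT)))) le_rfl
    _ ≤ w.toFun t := hvw t ⟨hs.1.trans hs.2, htT⟩

instance : BorelSpace (VPlus T) := ⟨rfl⟩

theorem measurable_toFun (t : ℝ) : Measurable fun v : VPlus T => v.toFun t :=
  measurable_of_Ioi fun c => (isOpen_lt_toFun c t).measurableSet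

/-- Steps at the rational grid points `j δ`, `δ < ε`, of heights within `ε` below `v`. -/
theorem exists_step_levyLE (v : VPlus T) {ε : ℝ} (hε : 0 < ε) :
    ∃ (q₀ : ℚ) (F : Finset (ℚ × ℚ)), LevyLE T ε v.toFun (step q₀ F : VPlus T).toFun ∧
      LevyLE T ε (step q₀ F : VPlus T).toFun v.toFun := by
  obtain ⟨δ, hδ₀, hδε⟩ := exists_rat_btwn hε
  obtain ⟨q₀, -, hq₀⟩ := (v.toFun δ).exists_rat_approx hε
  choose q hq using fun j : ℕ => (v.toFun (j * δ)).exists_rat_approx hε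
  set F := (Finset.Icc 1 ⌈T / δ⌉₊).image fun j : ℕ => ((j : ℚ) * δ, q j)
  refine ⟨q₀, F, fun t ht => ?_, fun t ht => ?_⟩ <;> rcases le_or_gt t ε with htε | htε
  · rw [levyShift_eq_bot v htε]
    exact bot_le
  · have hs : t - ε ∈ Ioo 0 T := ⟨by linarith, by linarith [ht.2]⟩
    set j := ⌈(t - ε) / δ⌉₊
    have hj₁ : t - ε ≤ j * δ := (div_le_iff₀ hδ₀).1 (Nat.le_ceil _)
    have hj₂ : (j : ℝ) * δ < t - ε + δ := by
      have := mul_lt_mul_of_pos_right (Nat.ceil_lt_add_one (div_nonneg hs.1.le hδ₀.le)) hδ₀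
      rwa [add_mul, div_mul_cancel₀ _ hδ₀.ne', one_mul] at this
    have hjF : ((j : ℚ) * δ, q j) ∈ F := Finset.mem_image_of_mem _ <| Finset.mem_Icc.2
      ⟨Nat.ceil_pos.2 (div_pos hs.1 hδ₀), Nat.ceil_mono (div_le_div_of_nonneg_right hs.2.le hδ₀.le)⟩
    calc levyShift ε v.toFun t = (v.toFun (t - ε)).map (· - ε) := by
          rw [levyShift, max_eq_left hs.1.le]
      _ ≤ (v.toFun (j * δ)).map (· - ε) :=
          WithBot.map_sub_le_map_sub (v.toFun_mono hj₁ (by linarith [ht.2])) le_rfl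
      _ ≤ ((q j : ℝ) : WithBot ℝ) := (hq j).1
      _ ≤ (step q₀ F : VPlus T).toFun t :=
          ((step_toFun_le_iff ht).1 le_rfl).2 _ hjF (by push_cast; linarith)
  · rw [levyShift_eq_bot (step q₀ F) htε]
    exact bot_le
  · have hs : t - ε ∈ Ioo 0 T := ⟨by linarith, by linarith [ht.2]⟩
    have hle : ∀ s ∈ Ioo 0 t, ∀ p : ℚ, (v.toFun s ≠ ⊥ → ((p : ℝ) : WithBot ℝ) ≤ v.toFun s) →
        ((p : ℝ) : WithBot ℝ) ≤ v.toFun t := fun s hs p hp =>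
      (hp (v.toFun_ne_bot ⟨hs.1, hs.2.trans ht.2⟩)).trans (v.toFun_mono hs.2.le ht.2)
    rw [levyShift, max_eq_left hs.1.le]
    refine (WithBot.map_sub_le_self hε.le _).trans
      ((step_toFun_le_iff hs).2 ⟨hle δ ⟨hδ₀, by linarith⟩ q₀ hq₀, ?_⟩)
    simp only [F, Finset.forall_mem_image]
    intro j hj hjt
    push_cast at hjt
    exact hle _ ⟨mul_pos (Nat.cast_pos.2 (Finset.mem_Icc.1 hj).1) hδ₀, by linarith⟩ (q j) (hq j).2

instance : TopologicalSpace.SeparableSpace (VPlus T) := by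
  refine ⟨⟨range fun p : ℚ × Finset (ℚ × ℚ) => step p.1 p.2, countable_range _,
    Metric.denseRange_iff.2 fun v r hr => ?_⟩⟩
  obtain ⟨q₀, F, h₁, h₂⟩ := exists_step_levyLE v (half_pos hr)
  exact ⟨(q₀, F), (dL_le (half_pos hr).le h₁ h₂).trans_lt (half_lt_self hr)⟩

instance : SecondCountableTopology (VPlus T) := UniformSpace.secondCountable_of_separable _

theorem levyLE_iff_forall_rat {v w : VPlus T} {ε : ℝ} (hε : 0 ≤ ε) :
    LevyLE T ε v.toFun w.toFun ↔
      ∀ r : ℚ, (r : ℝ) ∈ Ioo 0 T → levyShift ε v.toFun r ≤ w.toFun r := by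
  refine ⟨fun h r hr => h r hr, fun h t ht => ?_⟩
  rcases le_or_gt t ε with htε | htε
  · rw [levyShift_eq_bot v htε]
    exact bot_le
  obtain ⟨y, hy⟩ := WithBot.ne_bot_iff_exists.1 (w.toFun_ne_bot ht)
  rw [levyShift, max_eq_left (by linarith), ← hy, WithBot.map_sub_le_coe_iff]
  refine toFun_le_of_forall_rat fun p hp => ?_
  obtain ⟨r, hpr, hrt⟩ := exists_rat_btwn (show (p : ℝ) + ε < t by linarith [hp.2])
  have hr : (r : ℝ) ∈ Ioo 0 T := ⟨by linarith [hp.1], hrt.trans ht.2⟩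
  have hpr' : (p : ℝ) ≤ max (r - ε) 0 := le_max_of_le_left (by linarith)
  have := (WithBot.map_sub_le_map_sub (v.toFun_mono hpr' (max_lt (by linarith [hr.2])
    (hr.1.trans hr.2))) le_rfl).trans ((h r hr).trans (w.toFun_mono hrt.le ht.2))
  rwa [← hy, WithBot.map_sub_le_coe_iff] at this

theorem dist_lt_iff_rat {v w : VPlus T} {ε : ℝ} : dist v w < ε ↔
    ∃ q : ℚ, (q : ℝ) ∈ Ico 0 ε ∧ LevyLE T q v.toFun w.toFun ∧ LevyLE T q w.toFun v.toFun := by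
  rw [dist_eq, dL_lt_iff]
  constructor
  · rintro ⟨δ, hδ, hδ₀, h₁, h₂⟩
    obtain ⟨q, hδq, hqε⟩ := exists_rat_btwn hδ
    exact ⟨q, ⟨hδ₀.trans hδq.le, hqε⟩, h₁.mono hδ₀ hδq.le, h₂.mono hδ₀ hδq.le⟩
  · rintro ⟨q, hq, h₁, h₂⟩
    exact ⟨q, hq.2, hq.1, h₁, h₂⟩

variable {Ω : Type*} [MeasurableSpace Ω]

theorem measurableSet_levyLE {W : Ω → VPlus T} (hW : ∀ t, Measurable fun ω => (W ω).toFun t)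
    (v : VPlus T) {ε : ℝ} (hε : 0 ≤ ε) :
    MeasurableSet {ω | LevyLE T ε (W ω).toFun v.toFun} ∧
      MeasurableSet {ω | LevyLE T ε v.toFun (W ω).toFun} := by
  have hshift : ∀ r, Measurable fun ω => levyShift ε (W ω).toFun r := fun r =>
    (Monotone.withBot_map fun _ _ h => sub_le_sub_right h ε).measurable.comp (hW _)
  simp only [levyLE_iff_forall_rat hε, ofPred_forall]
  exact ⟨.iInter fun r => .iInter fun _ => measurableSet_le (hshift r) measurable_const,
    .iInter fun r => .iInter fun _ => measurableSet_le measurable_const (hW r)⟩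

theorem measurable_of_forall_toFun {W : Ω → VPlus T}
    (hW : ∀ t, Measurable fun ω => (W ω).toFun t) : Measurable W := by
  have hball : ∀ v ε, MeasurableSet (W ⁻¹' Metric.ball v ε) := fun v ε => by
    have : W ⁻¹' Metric.ball v ε = ⋃ q : ℚ, ⋃ (hq : (q : ℝ) ∈ Ico 0 ε),
        {ω | LevyLE T q (W ω).toFun v.toFun} ∩ {ω | LevyLE T q v.toFun (W ω).toFun} := by
      ext ω
      simp only [mem_preimage, Metric.mem_ball, dist_lt_iff_rat, mem_iUnion, mem_inter_iff,
        mem_ofPred_eq, exists_prop]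
    rw [this]
    exact .iUnion fun q => .iUnion fun hq =>
      (measurableSet_levyLE hW v hq.1).1.inter (measurableSet_levyLE hW v hq.1).2
  refine measurable_of_isOpen fun U hU => ?_
  choose! ε hε hεU using Metric.isOpen_iff.1 hU
  obtain ⟨S, hS, hSU⟩ := TopologicalSpace.isOpen_iUnion_countable
    (fun v : U => Metric.ball (v : VPlus T) (ε v)) fun _ => Metric.isOpen_ball
  have hU : U = ⋃ v ∈ S, Metric.ball (v : VPlus T) (ε v) := by
    rw [hSU]
    refine Subset.antisymm (fun w hw => mem_iUnion.2 ⟨⟨w, hw⟩, Metric.mem_ball_self (hε w hw)⟩) ?_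
    exact iUnion_subset fun v => hεU v v.2
  rw [hU, preimage_iUnion₂]
  exact .biUnion hS fun v _ => hball v (ε v)

instance : MeasurableSup₂ (VPlus T) :=
  ⟨measurable_of_forall_toFun fun t =>
    ((measurable_toFun t).comp measurable_fst).max ((measurable_toFun t).comp measurable_snd)⟩

instance : MeasurableInf₂ (VPlus T) :=
  ⟨measurable_of_forall_toFun fun t =>
    ((measurable_toFun t).comp measurable_fst).min ((measurable_toFun t).comp measurable_snd)⟩

section Countable

variable {ι : Type*} [Countable ι] [Nonempty ι] {F : ι → Ω → VPlus T}

theorem measurable_ciSup (hF : ∀ i, Measurable (F i))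
    (hbdd : ∀ ω, BddAbove (range fun i => F i ω)) : Measurable fun ω => ⨆ i, F i ω :=
  measurable_of_forall_toFun fun t => by
    simp_rw [toFun_ciSup (hbdd _)]
    exact Measurable.iSup fun i => (measurable_toFun t).comp (hF i)

theorem measurable_ciInf (hF : ∀ i, Measurable (F i))
    (hbdd : ∀ ω, BddBelow (range fun i => F i ω)) : Measurable fun ω => ⨅ i, F i ω :=
  measurable_of_forall_toFun fun t => by
    simp_rw [toFun_ciInf (hbdd _)]
    split_ifs
    · exact Measurable.iSup fun q => Measurable.iInf fun i => (measurable_toFun _).comp (hF i)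
    · exact measurable_const

end Countable

theorem lel_iff_ae_le {P : Measure Ω} {A B : Ω → VPlus T} : lel T P A B ↔ A ≤ᵐ[P] B := by
  refine ⟨fun h => ?_, fun h t _ _ => h.mono fun ω hω => hω t⟩
  have : ∀ᵐ ω ∂P, ∀ q : ℚ, (q : ℝ) ∈ Ioo 0 T → (A ω).toFun q ≤ (B ω).toFun q :=
    ae_all_iff.2 fun q => by
      by_cases hq : (q : ℝ) ∈ Ioo 0 T
      · exact (h q hq.1.le hq.2).mono fun ω hω _ => hω
      · exact ae_of_all _ fun ω h => absurd h hq
  exact this.mono fun ω hω => le_of_forall_rat hω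

variable (P : Measure Ω) [IsFiniteMeasure P] {ι : Type*} [Nonempty ι] {F : ι → Ω → VPlus T}

theorem exists_countable_ae_le_ciSup (hF : ∀ i, Measurable (F i))
    (hbdd : ∀ ω, BddAbove (range fun i => F i ω)) :
    ∃ J : Set ι, J.Countable ∧ J.Nonempty ∧ ∀ i, ∀ᵐ ω ∂P, F i ω ≤ ⨆ j : J, F j ω := by
  obtain ⟨J, hJ, hAJ⟩ := exists_countable_forall_ae_subset_biUnion P
    (fun (k : ℚ × ℚ) i => {ω | ((k.2 : ℝ) : WithBot ℝ) < (F i ω).toFun k.1})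
    fun k i => measurableSet_lt measurable_const ((measurable_toFun _).comp (hF i))
  obtain ⟨i₀⟩ := ‹Nonempty ι›
  have : Nonempty (insert i₀ J : Set ι) := ⟨⟨i₀, mem_insert _ _⟩⟩
  refine ⟨insert i₀ J, hJ.insert i₀, insert_nonempty _ _, fun i => ?_⟩
  filter_upwards [ae_all_iff.2 fun k => hAJ k i] with ω hω
  refine le_of_forall_rat fun r _ => WithBot.le_of_forall_rat_lt_imp_lt fun c hc => ?_
  obtain ⟨j, hj, hcj⟩ := mem_iUnion₂.1 (hω (r, c) hc)
  refine hcj.trans_le (le_ciSup (f := fun j : (insert i₀ J : Set ι) => F j ω) ?_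
    ⟨j, mem_insert_of_mem _ hj⟩ r)
  exact (hbdd ω).mono (range_subset_iff.2 fun j => mem_range_self _)

theorem exists_countable_ae_ciInf_le (hF : ∀ i, Measurable (F i))
    (hbdd : ∀ ω, BddBelow (range fun i => F i ω)) :
    ∃ J : Set ι, J.Countable ∧ J.Nonempty ∧ ∀ i, ∀ᵐ ω ∂P, ⨅ j : J, F j ω ≤ F i ω := by
  obtain ⟨J, hJ, hAJ⟩ := exists_countable_forall_ae_subset_biUnion P
    (fun (k : ℚ × ℚ) i => {ω | (F i ω).toFun k.1 < ((k.2 : ℝ) : WithBot ℝ)})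
    fun k i => measurableSet_lt ((measurable_toFun _).comp (hF i)) measurable_const
  obtain ⟨i₀⟩ := ‹Nonempty ι›
  have : Nonempty (insert i₀ J : Set ι) := ⟨⟨i₀, mem_insert _ _⟩⟩
  refine ⟨insert i₀ J, hJ.insert i₀, insert_nonempty _ _, fun i => ?_⟩
  filter_upwards [ae_all_iff.2 fun k => hAJ k i] with ω hω
  refine le_of_forall_rat fun r _ => WithBot.le_of_forall_lt_rat_imp_lt fun c hc => ?_
  obtain ⟨j, hj, hjc⟩ := mem_iUnion₂.1 (hω (r, c) hc)
  refine (ciInf_le (f := fun j : (insert i₀ J : Set ι) => F j ω) ?_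
    ⟨j, mem_insert_of_mem _ hj⟩ r).trans_lt hjc
  exact (hbdd ω).mono (range_subset_iff.2 fun j => mem_range_self _)

end VPlus

open VPlus

section Lattice

variable {T : ℝ} {Ω : Type*} [MeasurableSpace Ω] (P : Measure Ω) [IsFiniteMeasure P]
  (Lm Lp : Ω → VPlus T) (Γ : Set (Ω → VPlus T))

theorem exists_lub_memL0 (hLp : Measurable Lp) (hΓmem : ∀ L ∈ Γ, MemL0 T P Lm Lp L)
    (hΓne : Γ.Nonempty) :
    ∃ Lbar : Ω → VPlus T, MemL0 T P Lm Lp Lbar ∧ (∀ L ∈ Γ, lel T P L Lbar) ∧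
      ∀ M : Ω → VPlus T, MemL0 T P Lm Lp M → (∀ L ∈ Γ, lel T P L M) → lel T P Lbar M := by
  have : Nonempty Γ := hΓne.to_subtype
  obtain ⟨J, hJ, hJne, hΓJ⟩ := exists_countable_ae_le_ciSup P
    (F := fun (L : Γ) ω => L.1 ω ⊓ Lp ω) (fun L => (hΓmem L L.2).1.inf hLp)
    fun ω => ⟨Lp ω, forall_mem_range.2 fun _ => inf_le_right⟩
  have := hJ.to_subtype
  have := hJne.to_subtype
  have hub : ∀ L ∈ Γ, lel T P L fun ω => ⨆ L : J, L.1.1 ω ⊓ Lp ω := fun L hL => by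
    refine lel_iff_ae_le.2 ?_
    filter_upwards [hΓJ ⟨L, hL⟩, lel_iff_ae_le.1 (hΓmem L hL).2.2] with ω h hLLp
    exact (le_inf le_rfl hLLp).trans h
  obtain ⟨L₀, hL₀⟩ := hΓne
  refine ⟨_, ⟨measurable_ciSup (fun L => (hΓmem _ L.1.2).1.inf hLp)
    fun ω => ⟨Lp ω, forall_mem_range.2 fun _ => inf_le_right⟩, ?_, ?_⟩, hub,
    fun M _ hM => lel_iff_ae_le.2 ?_⟩
  · exact lel_iff_ae_le.2 ((lel_iff_ae_le.1 (hΓmem L₀ hL₀).2.1).trans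
      (lel_iff_ae_le.1 (hub L₀ hL₀)))
  · exact lel_iff_ae_le.2 (ae_of_all _ fun ω => ciSup_le fun L => inf_le_right)
  · filter_upwards [ae_all_iff.2 fun L : J => lel_iff_ae_le.1 (hM _ L.1.2)] with ω h
    exact ciSup_le fun L => inf_le_of_left_le (h L)

theorem exists_glb_memL0 (hLm : Measurable Lm) (hΓmem : ∀ L ∈ Γ, MemL0 T P Lm Lp L)
    (hΓne : Γ.Nonempty) :
    ∃ Lund : Ω → VPlus T, MemL0 T P Lm Lp Lund ∧ (∀ L ∈ Γ, lel T P Lund L) ∧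
      ∀ M : Ω → VPlus T, MemL0 T P Lm Lp M → (∀ L ∈ Γ, lel T P M L) → lel T P M Lund := by
  have : Nonempty Γ := hΓne.to_subtype
  obtain ⟨J, hJ, hJne, hΓJ⟩ := exists_countable_ae_ciInf_le P
    (F := fun (L : Γ) ω => L.1 ω ⊔ Lm ω) (fun L => (hΓmem L L.2).1.sup hLm)
    fun ω => ⟨Lm ω, forall_mem_range.2 fun _ => le_sup_right⟩
  have := hJ.to_subtype
  have := hJne.to_subtype
  have hlb : ∀ L ∈ Γ, lel T P (fun ω => ⨅ L : J, L.1.1 ω ⊔ Lm ω) L := fun L hL => by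
    refine lel_iff_ae_le.2 ?_
    filter_upwards [hΓJ ⟨L, hL⟩, lel_iff_ae_le.1 (hΓmem L hL).2.1] with ω h hLmL
    exact h.trans (sup_le le_rfl hLmL)
  obtain ⟨L₀, hL₀⟩ := hΓne
  refine ⟨_, ⟨measurable_ciInf (fun L => (hΓmem _ L.1.2).1.sup hLm)
    fun ω => ⟨Lm ω, forall_mem_range.2 fun _ => le_sup_right⟩, ?_, ?_⟩, hlb,
    fun M hM hM' => lel_iff_ae_le.2 ?_⟩
  · exact lel_iff_ae_le.2 (ae_of_all _ fun ω => le_ciInf fun L => le_sup_right)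
  · exact lel_iff_ae_le.2 ((lel_iff_ae_le.1 (hlb L₀ hL₀)).trans
      (lel_iff_ae_le.1 (hΓmem L₀ hL₀).2.2))
  · filter_upwards [ae_all_iff.2 fun L : J => lel_iff_ae_le.1 (hM' _ L.1.2),
      lel_iff_ae_le.1 hM.2.1] with ω h hLmM
    exact le_ciInf fun L => le_sup_of_le_left (h L)

end Lattice

theorem L0_complete_lattice_general (T : ℝ)
    {Ω : Type*} [MeasurableSpace Ω] (P : Measure Ω) [IsProbabilityMeasure P]
    (Lm Lp : Ω → VPlus T) (hLm : Measurable Lm) (hLp : Measurable Lp)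
    (Γ : Set (Ω → VPlus T)) (hΓmem : ∀ L ∈ Γ, MemL0 T P Lm Lp L)
    (hΓne : Γ.Nonempty) :
    (∃ Lbar : Ω → VPlus T, MemL0 T P Lm Lp Lbar ∧
      (∀ L ∈ Γ, lel T P L Lbar) ∧
      (∀ M : Ω → VPlus T, MemL0 T P Lm Lp M → (∀ L ∈ Γ, lel T P L M) →
        lel T P Lbar M)) ∧
    (∃ Lund : Ω → VPlus T, MemL0 T P Lm Lp Lund ∧
      (∀ L ∈ Γ, lel T P Lund L) ∧
      (∀ M : Ω → VPlus T, MemL0 T P Lm Lp M → (∀ L ∈ Γ, lel T P M L) →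
        lel T P M Lund)) :=
  ⟨exists_lub_memL0 P Lm Lp Γ hLp hΓmem hΓne, exists_glb_memL0 P Lm Lp Γ hLm hΓmem hΓne⟩

/-- **`(𝕃₀, ≤_l)` is a complete lattice (Proposition 4.2).**
Every nonempty `Γ ⊆ 𝕃₀` has a least upper bound and a greatest lower bound in
`(𝕃₀, ≤_l)`. -/
theorem L0_complete_lattice (T : ℝ) (hT : 0 < T)
    {Ω : Type*} [MeasurableSpace Ω] (P : Measure Ω) [IsProbabilityMeasure P]
    (Lm Lp : Ω → VPlus T) (hLm : Measurable Lm) (hLp : Measurable Lp)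
    (hLmLp : lel T P Lm Lp)
    (Γ : Set (Ω → VPlus T)) (hΓmem : ∀ L ∈ Γ, MemL0 T P Lm Lp L)
    (hΓne : Γ.Nonempty) :
    (∃ Lbar : Ω → VPlus T, MemL0 T P Lm Lp Lbar ∧
      (∀ L ∈ Γ, lel T P L Lbar) ∧
      (∀ M : Ω → VPlus T, MemL0 T P Lm Lp M → (∀ L ∈ Γ, lel T P L M) →
        lel T P Lbar M)) ∧
    (∃ Lund : Ω → VPlus T, MemL0 T P Lm Lp Lund ∧
      (∀ L ∈ Γ, lel T P Lund L) ∧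
      (∀ M : Ω → VPlus T, MemL0 T P Lm Lp M → (∀ L ∈ Γ, lel T P M L) →
        lel T P M Lund)) :=
  L0_complete_lattice_general T P Lm Lp hLm hLp Γ hΓmem hΓne

end
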